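/- arXiv:1606.01036 — 3 statements merged into one kernel-verified Lean document; each statement's English description precedes it below -/
import Mathlib

section
/- Let V be a real inner product space, W ∈ V with W ≠ 0, set u = |W|, and let y ∈ V with ⟨y, W⟩ > 0, F = |y|²/(2⟨y, W⟩). Then the ship's through-water velocity e := y/F − W satisfies |e| = u and ⟨e + W, W⟩ > 0; conversely, for any e with |e| = u and e ≠ −W, the vector v := e + W satisfies ⟨v, W⟩ > 0 and v lies in the domain of F with F(v) = 1. -/
/-! The indicatrix `{F = 1}` of the Kropina metric `F y = ‖y‖² / (2⟪y, W⟫)` is the sphere of radius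
`‖W‖` centred at `W`, with the origin removed: `‖v - W‖² = ‖W‖²` expands to `‖v‖² = 2⟪v, W⟫`.
Since `F` is positively homogeneous of degree one, `y / F y` lies on the indicatrix, so the heading
`e = y / F y - W` has norm `‖W‖`; conversely `v = e + W` lies on that sphere and is nonzero when
`e ≠ -W`. -/

open scoped InnerProductSpace

section Kropina

variable {V : Type*} [NormedAddCommGroup V] [InnerProductSpace ℝ V]

noncomputable def kropina (W y : V) : ℝ := ‖y‖ ^ 2 / (2 * ⟪y, W⟫_ℝ)

theorem kropina_smul (W y : V) (t : ℝ) : kropina W (t • y) = t * kropina W y := by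
  rcases eq_or_ne t 0 with rfl | ht
  · simp [kropina]
  · simp only [kropina, norm_smul, mul_pow, Real.norm_eq_abs, sq_abs, real_inner_smul_left]
    field_simp

theorem kropina_pos {W y : V} (hy : 0 < ⟪y, W⟫_ℝ) : 0 < kropina W y := by
  have hy₀ : y ≠ 0 := by
    rintro rfl
    simp at hy
  unfold kropina
  positivity

theorem norm_sub_eq_norm_iff_norm_sq_eq_two_mul_inner (v W : V) :
    ‖v - W‖ = ‖W‖ ↔ ‖v‖ ^ 2 = 2 * ⟪v, W⟫_ℝ := by
  rw [← sq_eq_sq₀ (norm_nonneg _) (norm_nonneg _), norm_sub_sq_real]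
  constructor <;> intro h <;> linarith

theorem inner_pos_of_norm_sq_eq_two_mul_inner {v W : V} (hv : v ≠ 0)
    (h : ‖v‖ ^ 2 = 2 * ⟪v, W⟫_ℝ) : 0 < ⟪v, W⟫_ℝ := by
  have : 0 < ‖v‖ ^ 2 := by positivity
  linarith

theorem kropina_eq_one_iff {W v : V} : kropina W v = 1 ↔ ‖v - W‖ = ‖W‖ ∧ v ≠ 0 := by
  rw [norm_sub_eq_norm_iff_norm_sq_eq_two_mul_inner]
  constructor
  · intro h
    have hden : 2 * ⟪v, W⟫_ℝ ≠ 0 := by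
      rintro hzero
      simp [kropina, hzero] at h
    have hsq : ‖v‖ ^ 2 = 2 * ⟪v, W⟫_ℝ := (div_eq_one_iff_eq hden).mp h
    refine ⟨hsq, ?_⟩
    rintro rfl
    simp at hden
  · rintro ⟨hsq, hv⟩
    have hden : 2 * ⟪v, W⟫_ℝ ≠ 0 := by
      linarith [inner_pos_of_norm_sq_eq_two_mul_inner hv hsq]
    exact (div_eq_one_iff_eq hden).mpr hsq

end Kropina

theorem kropina_indicatrix_heading_correspondence_general
    {V : Type*} [NormedAddCommGroup V] [InnerProductSpace ℝ V]
    (W : V) (u : ℝ) (hu : u = ‖W‖) :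
    (∀ y : V, 0 < ⟪y, W⟫_ℝ →
      ∀ F : ℝ, F = ‖y‖ ^ 2 / (2 * ⟪y, W⟫_ℝ) →
        ‖F⁻¹ • y - W‖ = u ∧ 0 < ⟪(F⁻¹ • y - W) + W, W⟫_ℝ) ∧
    (∀ e : V, ‖e‖ = u → e ≠ -W →
      0 < ⟪e + W, W⟫_ℝ ∧ ‖e + W‖ ^ 2 / (2 * ⟪e + W, W⟫_ℝ) = 1) := by
  subst hu
  refine ⟨fun y hy F hF => ?_, fun e he hne => ?_⟩
  · have hF : F = kropina W y := hF
    have hFpos : 0 < F := hF ▸ kropina_pos hy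
    have hunit : kropina W (F⁻¹ • y) = 1 := by
      rw [kropina_smul, ← hF, inv_mul_cancel₀ hFpos.ne']
    refine ⟨(kropina_eq_one_iff.mp hunit).1, ?_⟩
    rw [sub_add_cancel, real_inner_smul_left]
    positivity
  · have hv : e + W ≠ 0 := fun h => hne (eq_neg_of_add_eq_zero_left h)
    have hsphere : ‖e + W - W‖ = ‖W‖ := by rwa [add_sub_cancel_right]
    have hunit : kropina W (e + W) = 1 := kropina_eq_one_iff.mpr ⟨hsphere, hv⟩
    refine ⟨inner_pos_of_norm_sq_eq_two_mul_inner hv ?_, hunit⟩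
    exact (norm_sub_eq_norm_iff_norm_sq_eq_two_mul_inner _ _).mp hsphere

theorem kropina_indicatrix_heading_correspondence
    {V : Type*} [NormedAddCommGroup V] [InnerProductSpace ℝ V]
    (W : V) (hW : W ≠ 0) (u : ℝ) (hu : u = ‖W‖) :
    (∀ y : V, 0 < ⟪y, W⟫_ℝ →
      ∀ F : ℝ, F = ‖y‖ ^ 2 / (2 * ⟪y, W⟫_ℝ) →
        ‖F⁻¹ • y - W‖ = u ∧ 0 < ⟪(F⁻¹ • y - W) + W, W⟫_ℝ) ∧
    (∀ e : V, ‖e‖ = u → e ≠ -W →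
      0 < ⟪e + W, W⟫_ℝ ∧ ‖e + W‖ ^ 2 / (2 * ⟪e + W, W⟫_ℝ) = 1) :=
  kropina_indicatrix_heading_correspondence_general W u hu
end

section
/- Let V be a real inner product space, W ∈ V with W ≠ 0. The function F(y) = |y|²/(2⟨y, W⟩) defined on H = {y : ⟨y, W⟩ > 0} is convex on H. -/
/-!
The norm is convex and nonnegative, and `y ↦ 2⟪y, W⟫` is linear and positive on the half-space.
The square of a nonnegative convex function divided by a positive concave function is convex,
because `(u, t) ↦ u² / t` is jointly convex on `t > 0`, nondecreasing in `u ≥ 0` and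
nonincreasing in `t`.
-/

open scoped InnerProductSpace

section

variable {𝕜 : Type*} [Field 𝕜] [LinearOrder 𝕜] [IsStrictOrderedRing 𝕜]

theorem sq_add_div_add_le {a b u v s t : 𝕜} (ha : 0 ≤ a) (hb : 0 ≤ b) (hs : 0 < s) (ht : 0 < t) :
    (a * u + b * v) ^ 2 / (a * s + b * t) ≤ a * (u ^ 2 / s) + b * (v ^ 2 / t) := by
  rcases (add_nonneg (mul_nonneg ha hs.le) (mul_nonneg hb ht.le)).eq_or_lt with h | h
  · rw [← h, div_zero]
    positivity
  rw [div_le_iff₀ h]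
  have gap : 0 ≤ a * b * (u * t - v * s) ^ 2 / (s * t) := by positivity
  calc (a * u + b * v) ^ 2
      ≤ (a * u + b * v) ^ 2 + a * b * (u * t - v * s) ^ 2 / (s * t) := le_add_of_nonneg_right gap
    _ = (a * (u ^ 2 / s) + b * (v ^ 2 / t)) * (a * s + b * t) := by
      field_simp
      ring

variable {E : Type*} [AddCommMonoid E] [Module 𝕜 E]

theorem ConvexOn.sq_div_of_concaveOn {s : Set E} {f g : E → 𝕜} (hf : ConvexOn 𝕜 s f)
    (hf₀ : ∀ x ∈ s, 0 ≤ f x) (hg : ConcaveOn 𝕜 s g) (hg₀ : ∀ x ∈ s, 0 < g x) :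
    ConvexOn 𝕜 s (fun x => f x ^ 2 / g x) := by
  refine ⟨hf.1, fun x hx y hy a b ha hb hab => ?_⟩
  calc f (a • x + b • y) ^ 2 / g (a • x + b • y)
      ≤ (a * f x + b * f y) ^ 2 / (a * g x + b * g y) := by
        gcongr
        · simpa only [smul_eq_mul, Set.mem_Ioi] using
            convex_Ioi 0 (hg₀ x hx) (hg₀ y hy) ha hb hab
        · exact hf₀ _ (hf.1 hx hy ha hb hab)
        · simpa only [smul_eq_mul] using hf.2 hx hy ha hb hab
        · simpa only [smul_eq_mul] using hg.2 hx hy ha hb hab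
    _ ≤ a * (f x ^ 2 / g x) + b * (f y ^ 2 / g y) :=
      sq_add_div_add_le ha hb (hg₀ x hx) (hg₀ y hy)

end

theorem kropina_convex_general
    {V : Type*} [NormedAddCommGroup V] [InnerProductSpace ℝ V]
    (W : V) :
    ConvexOn ℝ {y : V | 0 < ⟪y, W⟫_ℝ}
      (fun y => ‖y‖ ^ 2 / (2 * ⟪y, W⟫_ℝ)) := by
  have hH : Convex ℝ {y : V | 0 < ⟪y, W⟫_ℝ} := by
    simpa [real_inner_comm] using convex_halfSpace_gt (innerₗ V W).isLinear 0
  have hℓ : ⇑(2 • innerₗ V W) = fun y => 2 * ⟪y, W⟫_ℝ := by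
    ext y
    simp [real_inner_comm]
  refine (convexOn_norm hH).sq_div_of_concaveOn (fun _ _ => norm_nonneg _) ?_
    (fun _ hy => mul_pos two_pos hy)
  rw [← hℓ]
  exact (2 • innerₗ V W).concaveOn hH

theorem kropina_convex
    {V : Type*} [NormedAddCommGroup V] [InnerProductSpace ℝ V]
    (W : V) (hW : W ≠ 0) :
    ConvexOn ℝ {y : V | 0 < ⟪y, W⟫_ℝ}
      (fun y => ‖y‖ ^ 2 / (2 * ⟪y, W⟫_ℝ)) :=
  kropina_convex_general W
end

section
/- Let V be a real inner product space, W ∈ V with W ≠ 0, and y₁, y₂ ∈ V with ⟨y₁, W⟩ > 0 and ⟨y₂, W⟩ > 0. Then F(y₁ + y₂) ≤ F(y₁) + F(y₂), where F(y) = |y|²/(2⟨y, W⟩). -/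
open scoped InnerProductSpace

theorem add_sq_div_add_le_sq_div_add_sq_div {R : Type*} [Field R] [LinearOrder R]
    [IsStrictOrderedRing R] (x y : R) {s t : R} (hs : 0 < s) (ht : 0 < t) :
    (x + y) ^ 2 / (s + t) ≤ x ^ 2 / s + y ^ 2 / t := by
  simpa [Fin.sum_univ_two] using
    Finset.sq_sum_div_le_sum_sq_div Finset.univ ![x, y] (g := ![s, t])
      (by simp [Fin.forall_fin_two, hs, ht])

theorem kropina_subadditive_general
    {V : Type*} [NormedAddCommGroup V] [InnerProductSpace ℝ V]
    (W : V) (y₁ y₂ : V)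
    (h₁ : 0 < ⟪y₁, W⟫_ℝ) (h₂ : 0 < ⟪y₂, W⟫_ℝ) :
    ‖y₁ + y₂‖ ^ 2 / (2 * ⟪y₁ + y₂, W⟫_ℝ) ≤
      ‖y₁‖ ^ 2 / (2 * ⟪y₁, W⟫_ℝ) + ‖y₂‖ ^ 2 / (2 * ⟪y₂, W⟫_ℝ) := by
  calc ‖y₁ + y₂‖ ^ 2 / (2 * ⟪y₁ + y₂, W⟫_ℝ)
      ≤ (‖y₁‖ + ‖y₂‖) ^ 2 / (2 * ⟪y₁, W⟫_ℝ + 2 * ⟪y₂, W⟫_ℝ) := by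
        rw [inner_add_left, mul_add]
        gcongr
        exact norm_add_le y₁ y₂
    _ ≤ ‖y₁‖ ^ 2 / (2 * ⟪y₁, W⟫_ℝ) + ‖y₂‖ ^ 2 / (2 * ⟪y₂, W⟫_ℝ) :=
        add_sq_div_add_le_sq_div_add_sq_div _ _ (by positivity) (by positivity)

theorem kropina_subadditive
    {V : Type*} [NormedAddCommGroup V] [InnerProductSpace ℝ V]
    (W : V) (hW : W ≠ 0) (y₁ y₂ : V)
    (h₁ : 0 < ⟪y₁, W⟫_ℝ) (h₂ : 0 < ⟪y₂, W⟫_ℝ) :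
    ‖y₁ + y₂‖ ^ 2 / (2 * ⟪y₁ + y₂, W⟫_ℝ) ≤
      ‖y₁‖ ^ 2 / (2 * ⟪y₁, W⟫_ℝ) + ‖y₂‖ ^ 2 / (2 * ⟪y₂, W⟫_ℝ) :=
  kropina_subadditive_general W y₁ y₂ h₁ h₂
end
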